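/- Let G be a non-archimedean CLI Polish group, X a countable discrete transitive Polish G-space (i.e., X is a single G-orbit), and 𝒢 = (G_n) ∈ dgnb(G). Then there exists k < ω such that ρ(T_𝒢^X) ≤ ρ^k(𝒢). -/

import Mathlib

noncomputable section

/-- `omegaPart a` is ω(a): the largest limit ordinal `≤ a`, or `0` if there is none. -/
def omegaPart (a : Ordinal) : Ordinal :=
  sSup {b : Ordinal | (b = 0 ∨ Order.IsSuccLimit b) ∧ b ≤ a}

/-- `IsTree lt` says that the binary relation `lt` on `T` is a tree order: it is irreflexive,
transitive, and the set of predecessors of any node is finite and linearly ordered. -/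
def IsTree {T : Type*} (lt : T → T → Prop) : Prop :=
  (∀ s, ¬ lt s s) ∧
  (∀ s t u, lt s t → lt t u → lt s u) ∧
  (∀ s, {t | lt t s}.Finite) ∧
  (∀ s t u, lt t s → lt u s → t = u ∨ lt t u ∨ lt u t)

/-- The length `lh s` of a node of a tree: the number of its strict predecessors. -/
def lh {T : Type*} (lt : T → T → Prop) (s : T) : ℕ :=
  Nat.card {t | lt t s}

/-- The rank `ρ(T)` of a tree `(T, lt)`: for a well-founded tree it is
`sup { ρ_T(s) + 1 : s ∈ T }` where `ρ_T(s) = sup { ρ_T(t) + 1 : s < t }`;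
for an ill-founded tree we use the junk value `0`. -/
def rhoRel {T : Type u} (lt : T → T → Prop) : Ordinal.{u} :=
  letI := Classical.dec (WellFounded (Function.swap lt))
  if h : WellFounded (Function.swap lt) then ⨆ s : T, Order.succ ((h.apply s).rank) else 0

/-- The nodes of the tree `T_ℰ^X` associated to a sequence `E` of (equivalence) relations
on `X`: pairs `(n, C)` where `C` is a non-singleton class `[x]_{E n}`. -/
def TreeNode (X : Type u) (E : ℕ → X → X → Prop) : Type u :=
  {p : ℕ × Set X // ∃ x : X, p.2 = {y | E p.1 x y} ∧ p.2 ≠ {x}}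

/-- The tree order on `T_ℰ^X`: `(n, C) < (m, D)` iff `n < m` and `C ⊇ D`. -/
def nodeLT {X : Type u} (E : ℕ → X → X → Prop) :
    TreeNode X E → TreeNode X E → Prop :=
  fun s t => s.1.1 < t.1.1 ∧ t.1.2 ⊆ s.1.2

/-- The tree `T_ℰ^X` is well-founded: no infinite strictly increasing sequence. -/
def TreeWF (X : Type u) (E : ℕ → X → X → Prop) : Prop :=
  WellFounded (Function.swap (nodeLT E))

/-- The rank `ρ(T_ℰ^X)`. -/
def treeRho (X : Type u) (E : ℕ → X → X → Prop) : Ordinal.{u} :=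
  rhoRel (nodeLT E)

/-- A Polish group: a topological group whose topology is Polish. -/
def IsPolishGroup (G : Type u) [Group G] [TopologicalSpace G] : Prop :=
  IsTopologicalGroup G ∧ PolishSpace G

/-- A topological group is non-archimedean if the open subgroups form a
neighborhood base of the identity. -/
def IsNonArch (G : Type u) [Group G] [TopologicalSpace G] : Prop :=
  ∀ U ∈ nhds (1 : G), ∃ H : Subgroup G, IsOpen (H : Set G) ∧ (H : Set G) ⊆ U

/-- A topological group is CLI if it admits a compatible complete left-invariant metric. -/
def IsCLI (G : Type u) [Group G] [TopologicalSpace G] : Prop :=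
  ∃ m : MetricSpace G,
    m.toUniformSpace.toTopologicalSpace = ‹TopologicalSpace G› ∧
    @CompleteSpace G m.toUniformSpace ∧
    ∀ g h k : G, m.dist (g * h) (g * k) = m.dist h k

/-- A topological group is TSI if it admits a compatible complete two-sided-invariant metric. -/
def IsTSI (G : Type u) [Group G] [TopologicalSpace G] : Prop :=
  ∃ m : MetricSpace G,
    m.toUniformSpace.toTopologicalSpace = ‹TopologicalSpace G› ∧
    @CompleteSpace G m.toUniformSpace ∧
    ∀ g h k : G, m.dist (g * h) (g * k) = m.dist h k ∧ m.dist (h * g) (k * g) = m.dist h k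

/-- `Dgnb G` is the set `dgnb(G)`: decreasing sequences `(G_n)` of open subgroups of `G`
with `G_0 = G` forming a neighborhood base of `1_G`. -/
structure Dgnb (G : Type u) [Group G] [TopologicalSpace G] where
  seq : ℕ → Subgroup G
  isOpen : ∀ n, IsOpen ((seq n : Set G))
  antitone : ∀ n, seq (n + 1) ≤ seq n
  zero_eq_top : seq 0 = ⊤
  basis : ∀ U ∈ nhds (1 : G), ∃ n, ((seq n : Set G)) ⊆ U

/-- The orbit equivalence relation of (the action of) a subgroup `H ≤ G` on a `G`-space `X`:
`x ∼ y` iff `g • x = y` for some `g ∈ H`. -/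
def subOrbit {G : Type u} [Group G] (H : Subgroup G) (X : Type v) [MulAction G X] :
    X → X → Prop :=
  fun x y => ∃ g ∈ H, g • x = y

/-- The tree `T_𝒢^X` of a `𝒢 ∈ dgnb(G)` and a `G`-space `X`: nodes are pairs `(n, C)`
with `C` a non-singleton `G_n`-orbit. We record it by its defining sequence of relations. -/
def dgnbRel {G : Type u} [Group G] [TopologicalSpace G] (𝒢 : Dgnb G) (X : Type v)
    [MulAction G X] : ℕ → X → X → Prop :=
  fun n => subOrbit (𝒢.seq n) X

/-- `ρ^k(𝒢) = ρ(T_𝒢^{G/G_k})`, where `G` acts by left translation on `G/G_k`. -/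
def rhoK {G : Type u} [Group G] [TopologicalSpace G] (𝒢 : Dgnb G) (k : ℕ) : Ordinal.{u} :=
  treeRho (G ⧸ 𝒢.seq k) (dgnbRel 𝒢 (G ⧸ 𝒢.seq k))

/-- `ρ(𝒢) = ρ(T_𝒢^{X(𝒢)})` where `X(𝒢) = ⊔_k G/G_k` is the disjoint union of the coset
spaces, with `G` acting by left translation on each summand. -/
def rhoDgnb {G : Type u} [Group G] [TopologicalSpace G] (𝒢 : Dgnb G) : Ordinal.{u} :=
  treeRho (Σ k : ℕ, G ⧸ 𝒢.seq k)
    (fun n p q => ∃ g ∈ 𝒢.seq n, q = ⟨p.1, g • p.2⟩)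

/-- `G` is α-CLI if `ρ(𝒢) ≤ ω·α` for any (equivalently, some) `𝒢 ∈ dgnb(G)`. -/
def IsAlphaCLI (G : Type u) [Group G] [TopologicalSpace G] (α : Ordinal.{u}) : Prop :=
  ∀ 𝒢 : Dgnb G, rhoDgnb 𝒢 ≤ Ordinal.omega0 * α

/-- `G` is L-α-CLI if `rank(G) ≤ α`, i.e. `ω(ρ(𝒢)) ≤ ω·α` for any (equivalently, some)
`𝒢 ∈ dgnb(G)`. -/
def IsLAlphaCLI (G : Type u) [Group G] [TopologicalSpace G] (α : Ordinal.{u}) : Prop :=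
  ∀ 𝒢 : Dgnb G, omegaPart (rhoDgnb 𝒢) ≤ Ordinal.omega0 * α

/-!
Fix `x₀ ∈ X` and `k` with `G_k` fixing `x₀` (stabilizers are open because `X` is discrete).
Then `g G_k ↦ g • x₀` is a `G`-equivariant surjection `G/G_k → X`, and every node `(n, C)` of
`T_𝒢^X` lifts to a node `(n, D)` of `T_𝒢^{G/G_k}` with image `C`, compatibly with the tree order.
Such a simulation bounds ranks, provided `T_𝒢^{G/G_k}` is well-founded.

Well-foundedness is where CLI enters. Along an infinite branch pick points `x i` in its orbits and
`h i ∈ G_{n i}` with `h i • x i = x (i+1)`; the products `w i = h (i-1) ⋯ h 0` have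
`w j (w i)⁻¹ ∈ G_{n i}`, so `(w i)⁻¹` is Cauchy for a left-invariant metric. If `p` is its limit,
`w i p → 1`, hence `w i p` eventually fixes `z = p⁻¹ • x 0`, i.e. the branch settles at `z`, and
its orbits are eventually singletons because the stabilizer of `z` is open.
-/

open Filter Topology MulAction

universe u

theorem Acc.exists_rank_le_of_simulation {α β : Type u} {r : α → α → Prop} {r' : β → β → Prop}
    (R : α → β → Prop) (hsim : ∀ a a' b, r a' a → R a b → ∃ b', r' b' b ∧ R a' b')
    {b : β} (hb : Acc r' b) : ∀ a, R a b → ∃ ha : Acc r a, ha.rank ≤ hb.rank := by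
  induction hb with
  | intro b hb ih =>
    intro a hab
    have ha : Acc r a := .intro a fun a' ha' =>
      let ⟨b', hb', hR⟩ := hsim a a' b ha' hab
      (ih b' hb' a' hR).1
    refine ⟨ha, ?_⟩
    rw [ha.rank_eq]
    refine Ordinal.iSup_le fun ⟨a', ha'⟩ => ?_
    obtain ⟨b', hb', hR⟩ := hsim a a' b ha' hab
    obtain ⟨_, hle⟩ := ih b' hb' a' hR
    exact Order.succ_le_of_lt (hle.trans_lt ((Acc.intro b hb).rank_lt_of_rel hb'))

theorem rhoRel_eq_iSup {T : Type u} {lt : T → T → Prop} (h : WellFounded (Function.swap lt)) :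
    rhoRel lt = ⨆ s, Order.succ (h.apply s).rank := by
  unfold rhoRel
  exact dif_pos h

theorem rhoRel_of_isEmpty {T : Type u} [IsEmpty T] (lt : T → T → Prop) : rhoRel lt = 0 := by
  rw [rhoRel_eq_iSup (WellFounded.intro fun a => isEmptyElim a)]
  exact ciSup_of_empty _

theorem rhoRel_le_of_simulation {α β : Type u} {lt : α → α → Prop} {lt' : β → β → Prop}
    (hwf : WellFounded (Function.swap lt')) (R : α → β → Prop) (hR : ∀ a, ∃ b, R a b)
    (hsim : ∀ a a' b, lt a a' → R a b → ∃ b', lt' b b' ∧ R a' b') :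
    rhoRel lt ≤ rhoRel lt' := by
  have hrank a b (hab : R a b) := (hwf.apply b).exists_rank_le_of_simulation R hsim a hab
  have hwfα : WellFounded (Function.swap lt) :=
    ⟨fun a => (hrank a _ (hR a).choose_spec).1⟩
  rw [rhoRel_eq_iSup hwfα, rhoRel_eq_iSup hwf]
  refine Ordinal.iSup_le fun a => ?_
  obtain ⟨b, hab⟩ := hR a
  obtain ⟨_, hle⟩ := hrank a b hab
  exact (Order.succ_le_succ hle).trans (Ordinal.le_iSup _ b)

section SubOrbit

variable {G : Type*} [Group G] {X Y : Type*} [MulAction G X] [MulAction G Y]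
  {H K : Subgroup G} {x y : X}

theorem subOrbit_refl (H : Subgroup G) (x : X) : subOrbit H X x x :=
  ⟨1, H.one_mem, one_smul _ _⟩

theorem subOrbit_symm (h : subOrbit H X x y) : subOrbit H X y x := by
  obtain ⟨g, hg, rfl⟩ := h
  exact ⟨g⁻¹, H.inv_mem hg, inv_smul_smul g x⟩

theorem subOrbit_trans {z : X} (hxy : subOrbit H X x y) (hyz : subOrbit H X y z) :
    subOrbit H X x z := by
  obtain ⟨g, hg, rfl⟩ := hxy
  obtain ⟨g', hg', rfl⟩ := hyz
  exact ⟨g' * g, H.mul_mem hg' hg, mul_smul g' g x⟩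

theorem setOf_subOrbit_congr (h : subOrbit H X x y) :
    {z | subOrbit H X x z} = {z | subOrbit H X y z} :=
  Set.ext fun _ => ⟨subOrbit_trans (subOrbit_symm h), subOrbit_trans h⟩

theorem setOf_subOrbit_mono (hHK : H ≤ K) (x : X) :
    {z | subOrbit H X x z} ⊆ {z | subOrbit K X x z} := by
  rintro z ⟨g, hg, rfl⟩
  exact ⟨g, hHK hg, rfl⟩

theorem setOf_subOrbit_eq_singleton (h : H ≤ stabilizer G x) : {z | subOrbit H X x z} = {x} := by
  ext z
  refine ⟨?_, fun hz => hz ▸ subOrbit_refl H x⟩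
  rintro ⟨g, hg, rfl⟩
  exact h hg

theorem image_setOf_subOrbit (φ : Y →[G] X) (H : Subgroup G) (q : Y) :
    φ '' {z | subOrbit H Y q z} = {z | subOrbit H X (φ q) z} := by
  ext z
  constructor
  · rintro ⟨_, ⟨g, hg, rfl⟩, rfl⟩
    exact ⟨g, hg, (map_smul φ g q).symm⟩
  · rintro ⟨g, hg, rfl⟩
    exact ⟨g • q, ⟨g, hg, rfl⟩, map_smul φ g q⟩

theorem setOf_subOrbit_ne_singleton_of_map (φ : Y →[G] X) {q : Y}
    (h : {z | subOrbit H X (φ q) z} ≠ {φ q}) : {z | subOrbit H Y q z} ≠ {q} := by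
  intro hq
  rw [← image_setOf_subOrbit, hq, Set.image_singleton] at h
  exact h rfl

theorem treeRho_subOrbit_le_of_surjective {X Y : Type u} [MulAction G X] [MulAction G Y]
    {S : ℕ → Subgroup G} (hS : Antitone S) (φ : Y →[G] X) (hφ : Function.Surjective φ)
    (hwf : WellFounded (Function.swap (nodeLT fun n => subOrbit (S n) Y))) :
    treeRho X (fun n => subOrbit (S n) X) ≤ treeRho Y (fun n => subOrbit (S n) Y) := by
  refine rhoRel_le_of_simulation hwf (fun s t => s.1.1 = t.1.1 ∧ φ '' t.1.2 = s.1.2) ?_ ?_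
  · intro s
    obtain ⟨x, hC, hne⟩ := s.2
    obtain ⟨q, rfl⟩ := hφ x
    exact ⟨⟨(s.1.1, _), q, rfl, setOf_subOrbit_ne_singleton_of_map φ (hC ▸ hne)⟩, rfl,
      (image_setOf_subOrbit φ _ q).trans hC.symm⟩
  · intro s s' t ⟨hlt, hsub⟩ ⟨hm, himage⟩
    obtain ⟨x', hC', hne'⟩ := s'.2
    obtain ⟨q, hD, -⟩ := t.2
    obtain ⟨q', hq', rfl⟩ : x' ∈ φ '' t.1.2 := himage ▸ hsub (hC' ▸ subOrbit_refl _ x')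
    rw [hD] at hq'
    refine ⟨⟨(s'.1.1, _), q', rfl, setOf_subOrbit_ne_singleton_of_map φ (hC' ▸ hne')⟩,
      ⟨hm ▸ hlt, ?_⟩, rfl, (image_setOf_subOrbit φ _ q').trans hC'.symm⟩
    rw [hD, setOf_subOrbit_congr hq']
    exact setOf_subOrbit_mono (hS (hm ▸ hlt).le) q'

end SubOrbit

def MulActionHom.ofLEStabilizer {G X : Type*} [Group G] [MulAction G X] {H : Subgroup G} (x : X)
    (hH : H ≤ stabilizer G x) : G ⧸ H →[G] X where
  toFun q := Quotient.liftOn' q (· • x) fun a b hab =>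
    calc a • x = a • (a⁻¹ * b) • x := congr_arg _ (hH (QuotientGroup.leftRel_apply.mp hab)).symm
      _ = b • x := by rw [smul_smul, mul_inv_cancel_left]
  map_smul' g q := Quotient.inductionOn' q fun a => mul_smul g a x

theorem MulActionHom.ofLEStabilizer_surjective {G X : Type*} [Group G] [MulAction G X]
    [IsPretransitive G X] {H : Subgroup G} (x : X) (hH : H ≤ stabilizer G x) :
    Function.Surjective (MulActionHom.ofLEStabilizer x hH) := fun y =>
  let ⟨g, hg⟩ := exists_smul_eq G x y
  ⟨g, hg⟩

section CompleteLeftInvariant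

variable {G : Type*} [Group G] [MetricSpace G] [IsTopologicalGroup G] [IsIsometricSMul G G]
  [CompleteSpace G] {S : ℕ → Subgroup G}

theorem exists_tendsto_mul_one (hbasis : ∀ U ∈ 𝓝 (1 : G), ∃ n, (S n : Set G) ⊆ U) {w : ℕ → G}
    (hw : ∀ i j, i ≤ j → w j * (w i)⁻¹ ∈ S i) : ∃ p, Tendsto (fun i => w i * p) atTop (𝓝 1) := by
  have hcauchy : CauchySeq fun i => (w i)⁻¹ := by
    refine Metric.cauchySeq_iff'.2 fun ε hε => ?_
    obtain ⟨m, hm⟩ := hbasis _ (Metric.ball_mem_nhds 1 hε)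
    refine ⟨m, fun j hj => ?_⟩
    calc dist (w j)⁻¹ (w m)⁻¹ = dist (w j * (w j)⁻¹) (w j * (w m)⁻¹) := (dist_mul_left ..).symm
      _ = dist (w j * (w m)⁻¹) 1 := by rw [mul_inv_cancel, dist_comm]
      _ < ε := hm (hw m j hj)
  obtain ⟨p, hp⟩ := cauchySeq_tendsto_of_complete hcauchy
  exact ⟨p, by simpa using hp.inv.mul_const p⟩

theorem exists_le_stabilizer_of_subOrbit_chain {Y : Type*} [MulAction G Y] (hS : Antitone S)
    (hbasis : ∀ U ∈ 𝓝 (1 : G), ∃ n, (S n : Set G) ⊆ U)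
    (hstab : ∀ y : Y, IsOpen (stabilizer G y : Set G)) {x : ℕ → Y}
    (hx : ∀ i, subOrbit (S i) Y (x i) (x (i + 1))) : ∃ i, S i ≤ stabilizer G (x i) := by
  choose h hhS hhx using hx
  let w : ℕ → G := fun i => Nat.rec 1 (fun j wj => h j * wj) i
  have hwx : ∀ i, w i • x 0 = x i := by
    intro i
    induction i with
    | zero => exact one_smul G _
    | succ i ih => rw [← hhx i, ← ih]; exact mul_smul _ _ _
  have hw : ∀ i j, i ≤ j → w j * (w i)⁻¹ ∈ S i := by
    intro i j hij
    induction j, hij using Nat.le_induction with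
    | base => simp
    | succ j hij ih =>
      rw [show w (j + 1) = h j * w j from rfl, mul_assoc]
      exact (S i).mul_mem (hS hij (hhS j)) ih
  obtain ⟨p, hp⟩ := exists_tendsto_mul_one hbasis hw
  set z := p⁻¹ • x 0
  have hz := (hstab z).mem_nhds (stabilizer G z).one_mem
  obtain ⟨m, hm⟩ := hbasis _ hz
  obtain ⟨N, hN⟩ := eventually_atTop.1 (hp hz)
  have hxz : ∀ i ≥ N, x i = z := fun i hi => by
    rw [← hwx i, ← mem_stabilizer_iff.mp (hN i hi), mul_smul, smul_inv_smul]
  refine ⟨max N m, ?_⟩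
  rw [hxz _ (le_max_left N m)]
  exact (hS (le_max_right N m)).trans hm

theorem wellFounded_nodeLT_subOrbit {Y : Type*} [MulAction G Y] (hS : Antitone S)
    (hbasis : ∀ U ∈ 𝓝 (1 : G), ∃ n, (S n : Set G) ⊆ U)
    (hstab : ∀ y : Y, IsOpen (stabilizer G y : Set G)) :
    WellFounded (Function.swap (nodeLT fun n => subOrbit (S n) Y)) := by
  refine wellFounded_iff_isEmpty_descending_chain.mpr ⟨fun ⟨f, hf⟩ => ?_⟩
  choose x hx hne using fun i => (f i).2
  have hn : StrictMono fun i => (f i).1.1 := strictMono_nat_of_lt_succ fun i => (hf i).1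
  have hchain i : subOrbit (S (f i).1.1) Y (x i) (x (i + 1)) := by
    have hmem := (hf i).2 (by rw [hx (i + 1)]; exact subOrbit_refl _ (x (i + 1)))
    rwa [hx i] at hmem
  have hbasis' : ∀ U ∈ 𝓝 (1 : G), ∃ i, (S (f i).1.1 : Set G) ⊆ U := fun U hU =>
    let ⟨m, hm⟩ := hbasis U hU
    ⟨m, (SetLike.coe_subset_coe.mpr (hS hn.le_apply)).trans hm⟩
  obtain ⟨i, hi⟩ := exists_le_stabilizer_of_subOrbit_chain (hS.comp_monotone hn.monotone)
    hbasis' hstab hchain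
  exact hne i ((hx i).trans (setOf_subOrbit_eq_singleton hi))

end CompleteLeftInvariant

theorem IsCLI.wellFounded_nodeLT_subOrbit {G Y : Type*} [Group G] [TopologicalSpace G]
    [IsTopologicalGroup G] (hG : IsCLI G) [MulAction G Y] {S : ℕ → Subgroup G} (hS : Antitone S)
    (hbasis : ∀ U ∈ 𝓝 (1 : G), ∃ n, (S n : Set G) ⊆ U)
    (hstab : ∀ y : Y, IsOpen (stabilizer G y : Set G)) :
    WellFounded (Function.swap (nodeLT fun n => subOrbit (S n) Y)) := by
  obtain ⟨m, rfl, hcomplete, hinv⟩ := hG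
  let := m
  have : IsIsometricSMul G G := ⟨fun c => Isometry.of_dist_eq (hinv c)⟩
  exact _root_.wellFounded_nodeLT_subOrbit hS hbasis hstab

theorem Dgnb.antitone_seq {G : Type*} [Group G] [TopologicalSpace G] (𝒢 : Dgnb G) :
    Antitone 𝒢.seq :=
  antitone_nat_of_succ_le 𝒢.antitone

theorem statement_17_general (G : Type) [Group G] [TopologicalSpace G] [IsTopologicalGroup G]
    (hcli : IsCLI G)
    (X : Type) [TopologicalSpace X] [DiscreteTopology X]
    [MulAction G X] [ContinuousSMul G X] [MulAction.IsPretransitive G X] (𝒢 : Dgnb G) :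
    ∃ k : ℕ, treeRho X (dgnbRel 𝒢 X) ≤ rhoK 𝒢 k := by
  rcases isEmpty_or_nonempty X with hX | ⟨⟨x₀⟩⟩
  · have : IsEmpty (TreeNode X (dgnbRel 𝒢 X)) := ⟨fun ⟨_, x, _⟩ => isEmptyElim x⟩
    exact ⟨0, (rhoRel_of_isEmpty _).trans_le zero_le⟩
  obtain ⟨k, hk⟩ := 𝒢.basis _ ((stabilizer_isOpen G x₀).mem_nhds (one_mem _))
  have : DiscreteTopology (G ⧸ 𝒢.seq k) := QuotientGroup.discreteTopology (𝒢.isOpen k)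
  have hwf := hcli.wellFounded_nodeLT_subOrbit (Y := G ⧸ 𝒢.seq k) 𝒢.antitone_seq 𝒢.basis
    (stabilizer_isOpen G)
  exact ⟨k, treeRho_subOrbit_le_of_surjective 𝒢.antitone_seq (MulActionHom.ofLEStabilizer x₀ hk)
    (MulActionHom.ofLEStabilizer_surjective x₀ hk) hwf⟩

theorem statement_17 (G : Type) [Group G] [TopologicalSpace G] [IsTopologicalGroup G]
    [PolishSpace G] (hna : IsNonArch G) (hcli : IsCLI G)
    (X : Type) [TopologicalSpace X] [DiscreteTopology X] [Countable X]
    [MulAction G X] [ContinuousSMul G X] [MulAction.IsPretransitive G X] (𝒢 : Dgnb G) :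
    ∃ k : ℕ, treeRho X (dgnbRel 𝒢 X) ≤ rhoK 𝒢 k :=
  statement_17_general G hcli X 𝒢

end
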